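/- arXiv:math/0703503 — 8 statements merged into one kernel-verified Lean document; each statement's English description precedes it below -/
import Mathlib

section
/- Let ζ_1,...,ζ_n be independent non-negative random variables and K, ε_0 ≥ 0. If for each k and all ε ≥ ε_0 one has P(ζ_k < ε) ≤ Kε, then for all ε ≥ ε_0, P(Σ_{k=1}^n ζ_k^2 < ε^2 n) ≤ (C K ε)^n, where C is an absolute constant. -/
open MeasureTheory ProbabilityTheory Real

/-- the geometric-type sum `∑ (j+1) e^{-j}` is at most 4. -/
lemma aux_sum_le : ∑' j : ℕ, ((j : ℝ) + 1) * (Real.exp 1)⁻¹ ^ j ≤ 4 := by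
  have hr0 : (0 : ℝ) < (Real.exp 1)⁻¹ := by positivity
  have hrhalf : (Real.exp 1)⁻¹ < 1 / 2 := by
    rw [inv_lt_comm₀ (Real.exp_pos 1) (by norm_num)]
    have := Real.exp_one_gt_d9
    norm_num at this ⊢
    linarith
  have hr1 : ‖(Real.exp 1)⁻¹‖ < 1 := by
    rw [Real.norm_eq_abs, abs_of_pos hr0]; linarith
  set r : ℝ := (Real.exp 1)⁻¹ with hrdef
  have hsum1 : Summable (fun j : ℕ => (j : ℝ) * r ^ j) := by
    have := summable_pow_mul_geometric_of_norm_lt_one (R := ℝ) 1 hr1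
    simpa using this
  have hsum2 : Summable (fun j : ℕ => r ^ j) := summable_geometric_of_lt_one hr0.le (by linarith)
  have heq : ∀ j : ℕ, ((j : ℝ) + 1) * r ^ j = (j : ℝ) * r ^ j + r ^ j := fun j => by ring
  rw [tsum_congr heq, Summable.tsum_add hsum1 hsum2, tsum_coe_mul_geometric_of_norm_lt_one hr1,
    tsum_geometric_of_lt_one hr0.le (by linarith)]
  have h1 : (1:ℝ)/2 < 1 - r := by linarith
  have h2 : r / (1 - r) ^ 2 ≤ 2 := by
    rw [div_le_iff₀ (by nlinarith)]
    nlinarith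
  have h3 : (1 - r)⁻¹ ≤ 2 := by
    rw [inv_le_comm₀ (by linarith) (by norm_num)]
    linarith
  linarith

/-- Bound on the Laplace transform of `ζ^2`. -/
lemma aux_mgf_bound {Ω : Type} [MeasurableSpace Ω] (μ : Measure Ω) [IsProbabilityMeasure μ]
    (ζ : Ω → ℝ) (hm : Measurable ζ) (hnn : ∀ ω, 0 ≤ ζ ω) (K ε₀ ε : ℝ) (hK : 0 ≤ K)
    (htail : ∀ s : ℝ, ε₀ ≤ s → μ {ω | ζ ω < s} ≤ ENNReal.ofReal (K * s))
    (hε : ε₀ ≤ ε) (hεpos : 0 < ε) :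
    ∫ ω, Real.exp (-(ε ^ 2)⁻¹ * (ζ ω) ^ 2) ∂μ ≤ 4 * K * ε := by
  set f : Ω → ℝ := fun ω => Real.exp (-(ε ^ 2)⁻¹ * (ζ ω) ^ 2) with hf
  have hfm : Measurable f := (((hm.pow_const 2).const_mul _).exp)
  have hfnn : ∀ ω, 0 ≤ f ω := fun ω => (Real.exp_pos _).le
  -- pointwise bound by a series of indicators
  have hpt : ∀ ω, ENNReal.ofReal (f ω) ≤
      ∑' j : ℕ, ENNReal.ofReal (Real.exp (-(j : ℝ))) *
        Set.indicator {ω' | ζ ω' < ε * Real.sqrt ((j : ℝ) + 1)} 1 ω := by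
    intro ω
    set x := ζ ω with hx
    have hx0 : 0 ≤ x := hnn ω
    set j : ℕ := ⌊x ^ 2 / ε ^ 2⌋₊ with hj
    have hjle : (j : ℝ) ≤ x ^ 2 / ε ^ 2 := Nat.floor_le (by positivity)
    have hjlt : x ^ 2 / ε ^ 2 < (j : ℝ) + 1 := Nat.lt_floor_add_one _
    have hmem : ζ ω < ε * Real.sqrt ((j : ℝ) + 1) := by
      have hx2 : x ^ 2 < ε ^ 2 * ((j : ℝ) + 1) := by
        rw [div_lt_iff₀ (by positivity)] at hjlt
        linarith [hjlt]
      have : x = Real.sqrt (x ^ 2) := by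
        rw [Real.sqrt_sq hx0]
      rw [← hx, this]
      calc Real.sqrt (x ^ 2) < Real.sqrt (ε ^ 2 * ((j : ℝ) + 1)) := by
            apply Real.sqrt_lt_sqrt (by positivity) hx2
        _ = ε * Real.sqrt ((j : ℝ) + 1) := by
            rw [Real.sqrt_mul (by positivity), Real.sqrt_sq hεpos.le]
    refine le_trans ?_ (ENNReal.le_tsum j)
    have hmem' : ω ∈ {ω' | ζ ω' < ε * Real.sqrt ((j : ℝ) + 1)} := hmem
    rw [Set.indicator_of_mem hmem', Pi.one_apply, mul_one]
    apply ENNReal.ofReal_le_ofReal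
    rw [hf]
    apply Real.exp_le_exp.mpr
    rw [neg_mul, neg_le_neg_iff]
    calc (j : ℝ) ≤ x ^ 2 / ε ^ 2 := hjle
      _ = (ε ^ 2)⁻¹ * x ^ 2 := by ring
  -- bound the lintegral
  have hlint : ∫⁻ ω, ENNReal.ofReal (f ω) ∂μ ≤ ENNReal.ofReal (4 * K * ε) := by
    calc ∫⁻ ω, ENNReal.ofReal (f ω) ∂μ
        ≤ ∫⁻ ω, ∑' j : ℕ, ENNReal.ofReal (Real.exp (-(j : ℝ))) *
            Set.indicator {ω' | ζ ω' < ε * Real.sqrt ((j : ℝ) + 1)} 1 ω ∂μ :=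
          lintegral_mono hpt
      _ = ∑' j : ℕ, ∫⁻ ω, ENNReal.ofReal (Real.exp (-(j : ℝ))) *
            Set.indicator {ω' | ζ ω' < ε * Real.sqrt ((j : ℝ) + 1)} 1 ω ∂μ := by
          apply lintegral_tsum
          intro j
          apply AEMeasurable.const_mul
          apply Measurable.aemeasurable
          exact (measurable_const.indicator (measurableSet_lt hm measurable_const))
      _ = ∑' j : ℕ, ENNReal.ofReal (Real.exp (-(j : ℝ))) *
            μ {ω' | ζ ω' < ε * Real.sqrt ((j : ℝ) + 1)} := by
          congr 1; funext j
          rw [lintegral_const_mul' _ _ ENNReal.ofReal_ne_top,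
            lintegral_indicator_one (measurableSet_lt hm measurable_const)]
      _ ≤ ∑' j : ℕ, ENNReal.ofReal (((j : ℝ) + 1) * (Real.exp 1)⁻¹ ^ j * (K * ε)) := by
          apply ENNReal.tsum_le_tsum
          intro j
          have hsq : ε₀ ≤ ε * Real.sqrt ((j : ℝ) + 1) := by
            have h1 : (1 : ℝ) ≤ Real.sqrt ((j : ℝ) + 1) := by
              rw [show (1:ℝ) = Real.sqrt 1 by simp]
              apply Real.sqrt_le_sqrt
              simp [Nat.cast_nonneg]
            calc ε₀ ≤ ε := hε
              _ = ε * 1 := (mul_one ε).symm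
              _ ≤ ε * Real.sqrt ((j : ℝ) + 1) := by
                  apply mul_le_mul_of_nonneg_left h1 hεpos.le
          calc ENNReal.ofReal (Real.exp (-(j : ℝ))) * μ {ω' | ζ ω' < ε * Real.sqrt ((j : ℝ) + 1)}
              ≤ ENNReal.ofReal (Real.exp (-(j : ℝ))) *
                ENNReal.ofReal (K * (ε * Real.sqrt ((j : ℝ) + 1))) := by
                apply mul_le_mul_right (htail _ hsq)
            _ = ENNReal.ofReal (Real.exp (-(j : ℝ)) * (K * (ε * Real.sqrt ((j : ℝ) + 1)))) := by
                rw [← ENNReal.ofReal_mul (Real.exp_pos _).le]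
            _ ≤ ENNReal.ofReal (((j : ℝ) + 1) * (Real.exp 1)⁻¹ ^ j * (K * ε)) := by
                apply ENNReal.ofReal_le_ofReal
                have hs : Real.sqrt ((j : ℝ) + 1) ≤ (j : ℝ) + 1 := by
                  have hsq := Real.sq_sqrt (show (0:ℝ) ≤ (j:ℝ)+1 by positivity)
                  have hsn := Real.sqrt_nonneg ((j:ℝ)+1)
                  nlinarith [Nat.cast_nonneg (α := ℝ) j]
                have hexp : Real.exp (-(j : ℝ)) = (Real.exp 1)⁻¹ ^ j := by
                  rw [← Real.exp_neg, ← Real.exp_nat_mul]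
                  congr 1; ring
                rw [hexp]
                have h1 : (Real.exp 1)⁻¹ ^ j * (K * (ε * Real.sqrt ((j:ℝ) + 1))) ≤
                    (Real.exp 1)⁻¹ ^ j * (K * (ε * ((j:ℝ) + 1))) := by
                  apply mul_le_mul_of_nonneg_left _ (by positivity)
                  apply mul_le_mul_of_nonneg_left _ hK
                  apply mul_le_mul_of_nonneg_left hs hεpos.le
                calc (Real.exp 1)⁻¹ ^ j * (K * (ε * Real.sqrt ((j:ℝ) + 1)))
                    ≤ (Real.exp 1)⁻¹ ^ j * (K * (ε * ((j:ℝ) + 1))) := h1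
                  _ = ((j : ℝ) + 1) * (Real.exp 1)⁻¹ ^ j * (K * ε) := by ring
      _ = ENNReal.ofReal (∑' j : ℕ, ((j : ℝ) + 1) * (Real.exp 1)⁻¹ ^ j * (K * ε)) := by
          rw [ENNReal.ofReal_tsum_of_nonneg]
          · intro j; positivity
          · apply Summable.mul_right
            have hr0 : (0 : ℝ) < (Real.exp 1)⁻¹ := by positivity
            have hr1 : ‖(Real.exp 1)⁻¹‖ < 1 := by
              rw [Real.norm_eq_abs, abs_of_pos hr0, inv_lt_one_iff₀]
              right
              have := Real.exp_one_gt_d9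
              linarith
            have hsum1 : Summable (fun j : ℕ => (j : ℝ) * (Real.exp 1)⁻¹ ^ j) := by
              have := summable_pow_mul_geometric_of_norm_lt_one (R := ℝ) 1 hr1
              simpa using this
            have hsum2 : Summable (fun j : ℕ => (Real.exp 1)⁻¹ ^ j) :=
              summable_geometric_of_norm_lt_one hr1
            have := hsum1.add hsum2
            apply this.congr
            intro j; ring
      _ ≤ ENNReal.ofReal (4 * K * ε) := by
          apply ENNReal.ofReal_le_ofReal
          rw [tsum_mul_right]
          calc (∑' j : ℕ, ((j:ℝ) + 1) * (Real.exp 1)⁻¹ ^ j) * (K * ε) ≤ 4 * (K * ε) := by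
                apply mul_le_mul_of_nonneg_right aux_sum_le (by positivity)
            _ = 4 * K * ε := by ring
  -- convert to Bochner integral
  have hint : Integrable f μ := by
    apply (integrable_const (1 : ℝ)).mono' hfm.aestronglyMeasurable
    apply ae_of_all
    intro ω
    rw [Real.norm_eq_abs, abs_of_nonneg (hfnn ω), hf]
    apply Real.exp_le_one_iff.mpr
    have := sq_nonneg (ζ ω)
    have h2 : (0:ℝ) ≤ (ε ^ 2)⁻¹ := by positivity
    nlinarith
  have heq : ENNReal.ofReal (∫ ω, f ω ∂μ) = ∫⁻ ω, ENNReal.ofReal (f ω) ∂μ :=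
    MeasureTheory.ofReal_integral_eq_lintegral_ofReal hint (ae_of_all _ hfnn)
  have : ENNReal.ofReal (∫ ω, f ω ∂μ) ≤ ENNReal.ofReal (4 * K * ε) := heq ▸ hlint
  rwa [ENNReal.ofReal_le_ofReal_iff (by positivity)] at this

/-- Tensorization lemma, part 1. -/
theorem tensorization_part1 :
    ∃ C : ℝ, 0 < C ∧
      ∀ (Ω : Type) [MeasurableSpace Ω] (μ : Measure Ω), IsProbabilityMeasure μ →
      ∀ (n : ℕ) (ζ : Fin n → Ω → ℝ) (K ε₀ : ℝ), 0 ≤ K → 0 ≤ ε₀ →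
      (∀ k, Measurable (ζ k)) → (∀ k ω, 0 ≤ ζ k ω) →
      iIndepFun ζ μ →
      (∀ k, ∀ ε : ℝ, ε₀ ≤ ε → μ {ω | ζ k ω < ε} ≤ ENNReal.ofReal (K * ε)) →
      ∀ ε : ℝ, ε₀ ≤ ε →
        μ {ω | ∑ k, (ζ k ω) ^ 2 < ε ^ 2 * n} ≤ ENNReal.ofReal ((C * K * ε) ^ n) := by
  refine ⟨4 * Real.exp 1, by positivity, ?_⟩
  intro Ω _ μ hμ n ζ K ε₀ hK hε₀ hmeas hnn hindep htail ε hε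
  rcases eq_or_lt_of_le (hε₀.trans hε) with hε0 | hεpos
  · -- ε = 0 : the event is empty
    have : {ω | ∑ k, (ζ k ω) ^ 2 < ε ^ 2 * n} = ∅ := by
      ext ω
      simp only [Set.mem_setOf_eq, Set.mem_empty_iff_false, iff_false, not_lt, ← hε0]
      simp only [ne_eq, OfNat.ofNat_ne_zero, not_false_eq_true, zero_pow, zero_mul]
      apply Finset.sum_nonneg
      intro k _
      positivity
    rw [this]
    simp
  · -- ε > 0 : Chernoff
    set t : ℝ := -(ε ^ 2)⁻¹ with ht
    have htneg : t ≤ 0 := by rw [ht]; simp only [neg_nonpos]; positivity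
    set X : Fin n → Ω → ℝ := fun k ω => (ζ k ω) ^ 2 with hX
    have hXmeas : ∀ k, Measurable (X k) := fun k => (hmeas k).pow_const 2
    have hXnn : ∀ k ω, 0 ≤ X k ω := fun k ω => sq_nonneg _
    have hXindep : iIndepFun X μ :=
      hindep.comp (fun _ x => x ^ 2) (fun _ => measurable_id.pow_const 2)
    have hintexp : ∀ (g : Ω → ℝ), Measurable g → (∀ ω, 0 ≤ g ω) →
        Integrable (fun ω => Real.exp (t * g ω)) μ := by
      intro g hg hgnn
      apply (integrable_const (1 : ℝ)).mono' ((hg.const_mul t).exp).aestronglyMeasurable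
      apply ae_of_all
      intro ω
      rw [Real.norm_eq_abs, abs_of_nonneg (Real.exp_pos _).le]
      apply Real.exp_le_one_iff.mpr
      have := hgnn ω
      nlinarith
    have hintsum : Integrable (fun ω => Real.exp (t * (∑ i, X i) ω)) μ := by
      apply hintexp
      · have hfun : (∑ i, X i) = fun a => ∑ i, X i a := by
          funext a; simp [Finset.sum_apply]
        rw [hfun]
        exact Finset.measurable_sum _ (fun k _ => hXmeas k)
      · intro ω
        rw [Finset.sum_apply]
        exact Finset.sum_nonneg fun k _ => hXnn k ω
    have hch := measure_le_le_exp_mul_mgf (μ := μ) (X := ∑ i, X i) (t := t)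
      (ε ^ 2 * n) htneg hintsum
    have hmgfsum : mgf (∑ i, X i) μ t = ∏ i, mgf (X i) μ t :=
      hXindep.mgf_sum hXmeas Finset.univ
    have hmgfk : ∀ k, mgf (X k) μ t ≤ 4 * K * ε := by
      intro k
      have := aux_mgf_bound μ (ζ k) (hmeas k) (hnn k) K ε₀ ε hK (htail k) hε hεpos
      simpa [mgf, hX, ht, neg_mul] using this
    have hprod : ∏ i : Fin n, mgf (X i) μ t ≤ (4 * K * ε) ^ n := by
      calc ∏ i : Fin n, mgf (X i) μ t ≤ ∏ _i : Fin n, (4 * K * ε) := by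
            apply Finset.prod_le_prod (fun i _ => mgf_nonneg) (fun i _ => hmgfk i)
        _ = (4 * K * ε) ^ n := by rw [Finset.prod_const, Finset.card_univ, Fintype.card_fin]
    have hexp : Real.exp (-t * (ε ^ 2 * n)) = Real.exp 1 ^ n := by
      rw [ht, neg_neg]
      have hε2 : (ε ^ 2)⁻¹ * (ε ^ 2 * n) = (n : ℝ) * 1 := by
        field_simp
      rw [hε2, Real.exp_nat_mul]
    have hfinal : (μ {ω | (∑ i, X i) ω ≤ ε ^ 2 * n}).toReal ≤ (4 * Real.exp 1 * K * ε) ^ n := by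
      calc (μ {ω | (∑ i, X i) ω ≤ ε ^ 2 * n}).toReal
          ≤ Real.exp (-t * (ε ^ 2 * n)) * mgf (∑ i, X i) μ t := hch
        _ ≤ Real.exp 1 ^ n * (4 * K * ε) ^ n := by
            rw [hexp, hmgfsum]
            apply mul_le_mul_of_nonneg_left hprod (by positivity)
        _ = (4 * Real.exp 1 * K * ε) ^ n := by
            rw [← mul_pow]; ring_nf
    calc μ {ω | ∑ k, (ζ k ω) ^ 2 < ε ^ 2 * n}
        ≤ μ {ω | (∑ i, X i) ω ≤ ε ^ 2 * n} := by
          apply measure_mono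
          intro ω hω
          simp only [Set.mem_setOf_eq, Finset.sum_apply] at hω ⊢
          exact le_of_lt hω
      _ = ENNReal.ofReal ((μ {ω | (∑ i, X i) ω ≤ ε ^ 2 * n}).toReal) :=
          (ENNReal.ofReal_toReal (measure_ne_top μ _)).symm
      _ ≤ ENNReal.ofReal ((4 * Real.exp 1 * K * ε) ^ n) := ENNReal.ofReal_le_ofReal hfinal
end

section
/- Let ζ_1,...,ζ_n be independent non-negative random variables. If there exist λ > 0 and μ ∈ (0,1) such that P(ζ_k < λ) ≤ μ for each k, then there exist λ_1 > 0 and μ_1 ∈ (0,1), depending only on λ and μ, such that P(Σ_{k=1}^n ζ_k^2 < λ_1 n) ≤ μ_1^n. -/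
open MeasureTheory ProbabilityTheory Real

/-- Tensorization lemma, part 2. -/
theorem tensorization_part2 (lam mu : ℝ) (hlam : 0 < lam) (hmu : mu ∈ Set.Ioo (0:ℝ) 1) :
    ∃ lam₁ : ℝ, 0 < lam₁ ∧ ∃ mu₁ ∈ Set.Ioo (0:ℝ) 1,
      ∀ (Ω : Type) [MeasurableSpace Ω] (μ : Measure Ω), IsProbabilityMeasure μ →
      ∀ (n : ℕ) (ζ : Fin n → Ω → ℝ),
      (∀ k, Measurable (ζ k)) → (∀ k ω, 0 ≤ ζ k ω) →
      iIndepFun ζ μ →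
      (∀ k, μ {ω | ζ k ω < lam} ≤ ENNReal.ofReal mu) →
      μ {ω | ∑ k, (ζ k ω) ^ 2 < lam₁ * n} ≤ ENNReal.ofReal (mu₁ ^ n) := by
  obtain ⟨hmu0, hmu1⟩ := hmu
  set ρ : ℝ := Real.exp (-lam ^ 2) + (1 - Real.exp (-lam ^ 2)) * mu with hρdef
  have hexp1 : Real.exp (-lam ^ 2) < 1 := by
    rw [Real.exp_lt_one_iff]
    nlinarith
  have hexp0 : 0 < Real.exp (-lam ^ 2) := Real.exp_pos _
  have hρ0 : 0 < ρ := by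
    have : 0 < (1 - Real.exp (-lam ^ 2)) * mu := by
      apply mul_pos (by linarith) hmu0
    linarith
  have hρ1 : ρ < 1 := by
    have : (1 - Real.exp (-lam ^ 2)) * mu < (1 - Real.exp (-lam ^ 2)) * 1 := by
      apply mul_lt_mul_of_pos_left hmu1 (by linarith)
    nlinarith
  refine ⟨-Real.log ρ / 2, by
      have := Real.log_neg hρ0 hρ1; linarith, Real.sqrt ρ,
    ⟨Real.sqrt_pos.mpr hρ0, by
      rw [show (1:ℝ) = Real.sqrt 1 by simp]
      exact Real.sqrt_lt_sqrt hρ0.le hρ1⟩, ?_⟩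
  intro Ω _ μ hP n ζ hmeas hnn hindep hbound
  set lam₁ : ℝ := -Real.log ρ / 2 with hlam₁
  -- squared variables
  set Y : Fin n → Ω → ℝ := fun k ω => (ζ k ω) ^ 2 with hY
  have hYmeas : ∀ k, Measurable (Y k) := fun k => (hmeas k).pow_const 2
  have hYindep : iIndepFun Y μ :=
    hindep.comp (fun _ x => x ^ 2) (fun _ => measurable_id.pow_const 2)
  have hYint : ∀ k, Integrable (fun ω => Real.exp ((-1) * Y k ω)) μ := by
    intro k
    apply Integrable.mono' (integrable_const (1:ℝ))
      (((hYmeas k).const_mul _).exp.aestronglyMeasurable)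
    filter_upwards with ω
    have hYv : Y k ω = ζ k ω ^ 2 := rfl
    rw [Real.norm_eq_abs, abs_of_pos (Real.exp_pos _), Real.exp_le_one_iff, hYv]
    nlinarith [sq_nonneg (ζ k ω)]
  -- bound on each mgf
  have hmgf_le : ∀ k, mgf (Y k) μ (-1) ≤ ρ := by
    intro k
    have hs : MeasurableSet {ω | ζ k ω < lam} := measurableSet_lt (hmeas k) measurable_const
    have hsub : ∀ ω ∈ {ω | ζ k ω < lam}ᶜ, Real.exp ((-1) * Y k ω) ≤ Real.exp (-lam ^ 2) := by
      intro ω hω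
      simp only [Set.mem_compl_iff, Set.mem_setOf_eq, not_lt] at hω
      have hYv : Y k ω = ζ k ω ^ 2 := rfl
      rw [Real.exp_le_exp, hYv]
      nlinarith [hnn k ω]
    have hle1 : ∀ ω, Real.exp ((-1) * Y k ω) ≤ 1 := by
      intro ω
      have hYv : Y k ω = ζ k ω ^ 2 := rfl
      rw [Real.exp_le_one_iff, hYv]
      nlinarith [sq_nonneg (ζ k ω)]
    have h1 : ∫ ω in {ω | ζ k ω < lam}, Real.exp ((-1) * Y k ω) ∂μ
        ≤ (μ {ω | ζ k ω < lam}).toReal := by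
      have := setIntegral_mono_on ((hYint k).integrableOn) (integrableOn_const
        (measure_ne_top μ _)) hs (fun ω _ => hle1 ω)
      simpa [Measure.real] using this
    have h2 : ∫ ω in {ω | ζ k ω < lam}ᶜ, Real.exp ((-1) * Y k ω) ∂μ
        ≤ Real.exp (-lam ^ 2) * (μ {ω | ζ k ω < lam}ᶜ).toReal := by
      have := setIntegral_mono_on ((hYint k).integrableOn) (integrableOn_const
        (measure_ne_top μ _)) hs.compl hsub
      simpa [mul_comm, Measure.real] using this
    have hsplit : mgf (Y k) μ (-1)
        = (∫ ω in {ω | ζ k ω < lam}, Real.exp ((-1) * Y k ω) ∂μ)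
          + ∫ ω in {ω | ζ k ω < lam}ᶜ, Real.exp ((-1) * Y k ω) ∂μ := by
      rw [mgf, ← integral_add_compl hs (hYint k)]
    have hm : (μ {ω | ζ k ω < lam}).toReal ≤ mu := by
      have := ENNReal.toReal_mono ENNReal.ofReal_ne_top (hbound k)
      rwa [ENNReal.toReal_ofReal hmu0.le] at this
    have hcompl : (μ {ω | ζ k ω < lam}ᶜ).toReal = 1 - (μ {ω | ζ k ω < lam}).toReal := by
      rw [measure_compl hs (measure_ne_top μ _)]
      rw [ENNReal.toReal_sub_of_le (measure_mono (Set.subset_univ _)) (measure_ne_top μ _)]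
      simp
    have hmle1 : (μ {ω | ζ k ω < lam}).toReal ≤ 1 := by
      have := measure_mono (Set.subset_univ {ω | ζ k ω < lam}) (μ := μ)
      simpa using ENNReal.toReal_mono (measure_ne_top μ _) this
    rw [hsplit, hρdef]
    rw [hcompl] at h2
    nlinarith [h1, h2]
  have hmgf_nonneg : ∀ k, 0 ≤ mgf (Y k) μ (-1) := fun k => mgf_nonneg
  -- Chernoff
  have hXint : Integrable (fun ω => Real.exp ((-1) * (∑ k, Y k) ω)) μ :=
    hYindep.integrable_exp_mul_sum hYmeas (fun i _ => hYint i)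
  have hcher := measure_le_le_exp_mul_mgf (X := ∑ k, Y k) (μ := μ) (lam₁ * n)
    (by norm_num : (-1:ℝ) ≤ 0) hXint
  have hmgfsum : mgf (∑ k, Y k) μ (-1) = ∏ k, mgf (Y k) μ (-1) :=
    hYindep.mgf_sum hYmeas Finset.univ
  have hprod : ∏ k, mgf (Y k) μ (-1) ≤ ρ ^ n := by
    have := Finset.prod_le_prod (s := Finset.univ) (f := fun k => mgf (Y k) μ (-1))
      (g := fun _ => ρ) (fun i _ => hmgf_nonneg i) (fun i _ => hmgf_le i)
    simpa using this
  have hkey : (μ {ω | (∑ k, Y k) ω ≤ lam₁ * n}).toReal ≤ Real.sqrt ρ ^ n := by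
    refine hcher.trans ?_
    rw [hmgfsum]
    have h1 : Real.exp (-(-1) * (lam₁ * n)) * ∏ k, mgf (Y k) μ (-1)
        ≤ Real.exp (-(-1) * (lam₁ * n)) * ρ ^ n := by
      apply mul_le_mul_of_nonneg_left hprod (Real.exp_pos _).le
    refine h1.trans_eq ?_
    have : Real.exp (-(-1) * (lam₁ * n)) = (Real.exp lam₁) ^ n := by
      rw [← Real.exp_nat_mul]; ring_nf
    rw [this, ← mul_pow]
    congr 1
    have hexplam : Real.exp lam₁ = ρ ^ ((-1:ℝ)/2) := by
      rw [hlam₁, show -Real.log ρ / 2 = Real.log ρ * ((-1)/2) by ring, Real.exp_mul,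
        Real.exp_log hρ0]
    rw [hexplam, ← Real.rpow_add_one hρ0.ne', Real.sqrt_eq_rpow]
    norm_num
  -- conclude
  have hsub2 : {ω | ∑ k, (ζ k ω) ^ 2 < lam₁ * n} ⊆ {ω | (∑ k, Y k) ω ≤ lam₁ * n} := by
    intro ω hω
    simp only [Set.mem_setOf_eq, Finset.sum_apply] at *
    exact hω.le
  calc μ {ω | ∑ k, (ζ k ω) ^ 2 < lam₁ * n} ≤ μ {ω | (∑ k, Y k) ω ≤ lam₁ * n} :=
        measure_mono hsub2
    _ = ENNReal.ofReal ((μ {ω | (∑ k, Y k) ω ≤ lam₁ * n}).toReal) :=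
        (ENNReal.ofReal_toReal (measure_ne_top μ _)).symm
    _ ≤ ENNReal.ofReal (Real.sqrt ρ ^ n) := ENNReal.ofReal_le_ofReal hkey
end

section
/- Let δ, ρ ∈ (0,1) and let x ∈ S^{n-1} be an incompressible vector, i.e. x has Euclidean distance greater than ρ from every vector with at most δn nonzero coordinates. Then there exists a set σ ⊆ {1,...,n} of cardinality |σ| ≥ (1/2) ρ^2 δ n such that ρ/√(2n) ≤ |x_k| ≤ 1/√(δn) for all k ∈ σ. -/
open Real Finset

/-- Incompressible vectors are spread: a unit vector at distance more than ρ from all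
δn-sparse vectors has at least ρ²δn/2 coordinates of size between ρ/√(2n) and 1/√(δn). -/
theorem incompressible_spread (n : ℕ) (δ ρ : ℝ)
    (hδ : δ ∈ Set.Ioo (0:ℝ) 1) (hρ : ρ ∈ Set.Ioo (0:ℝ) 1)
    (x : Fin n → ℝ) (hx : ∑ k, (x k) ^ 2 = 1)
    (hinc : ∀ y : Fin n → ℝ,
      ((Finset.univ.filter fun k => y k ≠ 0).card : ℝ) ≤ δ * n →
      ρ < Real.sqrt (∑ k, (x k - y k) ^ 2)) :
    ∃ σ : Finset (Fin n), (1/2) * ρ ^ 2 * δ * n ≤ σ.card ∧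
      ∀ k ∈ σ, ρ / Real.sqrt (2 * n) ≤ |x k| ∧ |x k| ≤ 1 / Real.sqrt (δ * n) := by
  obtain ⟨hδ0, hδ1⟩ := hδ
  obtain ⟨hρ0, hρ1⟩ := hρ
  have hn : 0 < (n:ℝ) := by
    rcases Nat.eq_zero_or_pos n with h | h
    · subst h; simp at hx
    · exact_mod_cast h
  have hδn : 0 < δ * n := by positivity
  set a := 1 / Real.sqrt (δ * n) with ha
  set b := ρ / Real.sqrt (2 * n) with hb
  have ha0 : 0 < a := by positivity
  have hb0 : 0 ≤ b := by positivity
  have ha2 : a ^ 2 = 1 / (δ * n) := by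
    rw [ha, div_pow, one_pow, Real.sq_sqrt hδn.le]
  have hb2 : b ^ 2 = ρ ^ 2 / (2 * n) := by
    rw [hb, div_pow, Real.sq_sqrt (by positivity)]
  set σ₁ : Finset (Fin n) := univ.filter (fun k => |x k| ≤ a) with hσ1
  have key : ρ ^ 2 < ∑ k ∈ σ₁, (x k) ^ 2 := by
    set y : Fin n → ℝ := fun k => if |x k| ≤ a then 0 else x k with hy
    have hcard : ((univ.filter fun k => y k ≠ 0).card : ℝ) ≤ δ * n := by
      set A : Finset (Fin n) := univ.filter (fun k => a < |x k|) with hA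
      have hsub : (univ.filter fun k => y k ≠ 0) ⊆ A := by
        intro k hk
        simp only [hA, mem_filter, mem_univ, true_and] at hk ⊢
        by_contra h
        exact hk (by simp [hy, not_lt.1 h])
      have hAle : (A.card : ℝ) * (1 / (δ * n)) ≤ 1 := by
        have h1 : A.card • (1 / (δ * n)) ≤ ∑ k ∈ A, (x k) ^ 2 := by
          apply Finset.card_nsmul_le_sum
          intro k hk
          simp only [hA, mem_filter, mem_univ, true_and] at hk
          have : a ^ 2 ≤ (x k) ^ 2 := by
            rw [← sq_abs (x k)]
            exact pow_le_pow_left₀ ha0.le hk.le 2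
          rw [← ha2]; exact this
        have h2 : ∑ k ∈ A, (x k) ^ 2 ≤ 1 := by
          rw [← hx]
          exact Finset.sum_le_sum_of_subset_of_nonneg (Finset.subset_univ A)
            (fun k _ _ => sq_nonneg _)
        rw [nsmul_eq_mul] at h1
        linarith
      have := Finset.card_le_card hsub
      have h3 : ((univ.filter fun k => y k ≠ 0).card : ℝ) ≤ (A.card : ℝ) := by
        exact_mod_cast this
      rw [mul_one_div, div_le_one hδn] at hAle
      linarith
    have h4 := hinc y hcard
    have h5 : ∑ k, (x k - y k) ^ 2 = ∑ k ∈ σ₁, (x k) ^ 2 := by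
      rw [hσ1, Finset.sum_filter]
      apply Finset.sum_congr rfl
      intro k _
      by_cases h : |x k| ≤ a <;> simp [hy, h]
    rw [h5] at h4
    exact (Real.lt_sqrt hρ0.le).mp h4
  refine ⟨σ₁.filter (fun k => b ≤ |x k|), ?_, ?_⟩
  · set σ := σ₁.filter (fun k => b ≤ |x k|) with hσ
    set τ := σ₁.filter (fun k => ¬ b ≤ |x k|) with hτ
    have hsplit : ∑ k ∈ σ, (x k) ^ 2 + ∑ k ∈ τ, (x k) ^ 2 = ∑ k ∈ σ₁, (x k) ^ 2 :=
      Finset.sum_filter_add_sum_filter_not σ₁ _ _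
    have hτle : ∑ k ∈ τ, (x k) ^ 2 ≤ ρ ^ 2 / 2 := by
      have h1 : ∑ k ∈ τ, (x k) ^ 2 ≤ τ.card • (ρ ^ 2 / (2 * n)) := by
        apply Finset.sum_le_card_nsmul
        intro k hk
        simp only [hτ, mem_filter, not_le] at hk
        have : (x k) ^ 2 ≤ b ^ 2 := by
          rw [← sq_abs (x k)]
          exact pow_le_pow_left₀ (abs_nonneg _) hk.2.le 2
        rw [← hb2]; exact this
      have h2 : (τ.card : ℝ) ≤ n := by
        have := Finset.card_le_card (Finset.subset_univ τ)
        simpa using (Nat.cast_le.mpr this : (τ.card : ℝ) ≤ (Finset.univ.card : ℝ))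
      rw [nsmul_eq_mul] at h1
      have h3 : (τ.card : ℝ) * (ρ ^ 2 / (2 * n)) ≤ n * (ρ ^ 2 / (2 * n)) := by
        apply mul_le_mul_of_nonneg_right h2 (by positivity)
      have h4 : (n : ℝ) * (ρ ^ 2 / (2 * n)) = ρ ^ 2 / 2 := by
        field_simp
      linarith
    have hσlb : ρ ^ 2 / 2 ≤ ∑ k ∈ σ, (x k) ^ 2 := by linarith
    have hσub : ∑ k ∈ σ, (x k) ^ 2 ≤ (σ.card : ℝ) * (1 / (δ * n)) := by
      have h1 : ∑ k ∈ σ, (x k) ^ 2 ≤ σ.card • (1 / (δ * n)) := by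
        apply Finset.sum_le_card_nsmul
        intro k hk
        simp only [hσ, hσ1, mem_filter, mem_univ, true_and] at hk
        have : (x k) ^ 2 ≤ a ^ 2 := by
          rw [← sq_abs (x k)]
          exact pow_le_pow_left₀ (abs_nonneg _) hk.1 2
        rw [← ha2]; exact this
      rwa [nsmul_eq_mul] at h1
    have : ρ ^ 2 / 2 ≤ (σ.card : ℝ) * (1 / (δ * n)) := le_trans hσlb hσub
    rw [mul_one_div, le_div_iff₀ hδn] at this
    nlinarith
  · intro k hk
    simp only [hσ1, mem_filter, mem_univ, true_and] at hk
    exact ⟨hk.2, hk.1⟩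
end

section
/- For every unit vector x ∈ S^{n-1} that is incompressible with parameters (δ, ρ), the set σ_2(x) := {k : |x_k| ≥ ρ n^{-1/2}} contains at least δn elements. -/
open Real Finset

/-- For an incompressible unit vector x, the set {k : |x_k| ≥ ρ n^{-1/2}} has at
least δn elements. -/
theorem incompressible_many_large_coords (n : ℕ) (δ ρ : ℝ)
    (hδ : δ ∈ Set.Ioo (0:ℝ) 1) (hρ : ρ ∈ Set.Ioo (0:ℝ) 1)
    (x : Fin n → ℝ) (hx : ∑ k, (x k) ^ 2 = 1)
    (hinc : ∀ y : Fin n → ℝ,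
      ((Finset.univ.filter fun k => y k ≠ 0).card : ℝ) ≤ δ * n →
      ρ < Real.sqrt (∑ k, (x k - y k) ^ 2)) :
    δ * n ≤ ((Finset.univ.filter fun k => ρ / Real.sqrt n ≤ |x k|).card : ℝ) := by
  by_contra h
  push_neg at h
  have hn : 0 < n := by
    rcases Nat.eq_zero_or_pos n with h0 | h0
    · subst h0; simp at hx
    · exact h0
  have hnR : (0:ℝ) < n := by exact_mod_cast hn
  set y : Fin n → ℝ := fun k => if ρ / Real.sqrt n ≤ |x k| then x k else 0 with hy
  have hsupp : ((Finset.univ.filter fun k => y k ≠ 0).card : ℝ) ≤ δ * n := by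
    have hsub : (Finset.univ.filter fun k => y k ≠ 0) ⊆
        (Finset.univ.filter fun k => ρ / Real.sqrt n ≤ |x k|) := by
      intro k hk
      simp only [mem_filter, mem_univ, true_and, hy] at hk ⊢
      by_contra hc
      simp [hc] at hk
    have := Finset.card_le_card hsub
    calc ((Finset.univ.filter fun k => y k ≠ 0).card : ℝ)
        ≤ ((Finset.univ.filter fun k => ρ / Real.sqrt n ≤ |x k|).card : ℝ) := by
          exact_mod_cast this
      _ ≤ δ * n := le_of_lt h
  have hlt := hinc y hsupp
  have hterm : ∀ k : Fin n, (x k - y k) ^ 2 ≤ ρ ^ 2 / n := by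
    intro k
    by_cases hc : ρ / Real.sqrt n ≤ |x k|
    · simp only [hy, hc, if_pos]
      simp
      positivity
    · simp only [hy, hc, if_neg, not_false_iff, sub_zero]
      push_neg at hc
      have h1 : |x k| ≤ ρ / Real.sqrt n := le_of_lt hc
      have h2 : (x k) ^ 2 ≤ (ρ / Real.sqrt n) ^ 2 := by
        rw [← sq_abs]
        exact pow_le_pow_left₀ (abs_nonneg _) h1 2
      calc (x k) ^ 2 ≤ (ρ / Real.sqrt n) ^ 2 := h2
        _ = ρ ^ 2 / n := by
            rw [div_pow, Real.sq_sqrt (le_of_lt hnR)]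
  have hsum : (∑ k, (x k - y k) ^ 2) ≤ ρ ^ 2 := by
    calc (∑ k, (x k - y k) ^ 2) ≤ ∑ _k : Fin n, ρ ^ 2 / n :=
          Finset.sum_le_sum fun k _ => hterm k
      _ = n * (ρ ^ 2 / n) := by simp [mul_comm]
      _ = ρ ^ 2 := by field_simp
  have : Real.sqrt (∑ k, (x k - y k) ^ 2) ≤ ρ := by
    have := Real.sqrt_le_sqrt hsum
    rwa [Real.sqrt_sq (le_of_lt hρ.1)] at this
  linarith
end

section
/- Let a = (a_1,...,a_n) with a_k ≥ 1 for all k, let z ≥ 1 and 0 < ε < π/4, and define f(t) = Σ_{k=1}^n sin^2(a_k t / 2). Then M := max_{|t| ≤ π/2} f(zt/ε) satisfies n/4 ≤ M ≤ n. -/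
open Real

lemma aux_int (c : ℝ) (hc : 4 / π ≤ c) :
    π / 4 ≤ ∫ t in (-(π/2))..(π/2), Real.sin (c * t / 2) ^ 2 := by
  have hπ := Real.pi_pos
  have hc0 : 0 < c := lt_of_lt_of_le (by positivity) hc
  have hd : c / 2 ≠ 0 := by positivity
  have h1 : (fun t => Real.sin (c * t / 2) ^ 2) = fun t => Real.sin ((c/2) * t) ^ 2 := by
    funext t; ring_nf
  have h2 : (∫ t in (-(π/2))..(π/2), Real.sin (c * t / 2) ^ 2)
      = (c/2)⁻¹ • ∫ x in (c/2 * -(π/2))..(c/2 * (π/2)), Real.sin x ^ 2 := by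
    rw [h1, intervalIntegral.integral_comp_mul_left (fun x => Real.sin x ^ 2) hd]
  rw [h2, integral_sin_sq]
  have hsc : Real.sin (c/2 * (π/2)) * Real.cos (c/2 * (π/2)) ≤ 1/2 := by
    have := Real.sin_le_one (2 * (c/2 * (π/2)))
    rw [Real.sin_two_mul] at this
    linarith
  have hc1 : 1 / c ≤ π / 4 := by
    rw [div_le_div_iff₀ hc0 (by norm_num : (0:ℝ) < 4)]
    have h5 : (4:ℝ) / π * π = 4 := div_mul_cancel₀ 4 hπ.ne'
    nlinarith [mul_le_mul_of_nonneg_right hc hπ.le]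
  simp only [mul_neg, Real.sin_neg, Real.cos_neg, smul_eq_mul]
  have key : (c / 2)⁻¹ * ((-Real.sin (c/2 * (π/2)) * Real.cos (c/2 * (π/2)) -
      Real.sin (c/2 * (π/2)) * Real.cos (c/2 * (π/2)) + c/2 * (π/2) - -(c/2 * (π/2))) / 2)
      = π / 2 - (Real.sin (c/2 * (π/2)) * Real.cos (c/2 * (π/2))) * (2 / c) := by
    field_simp; ring
  rw [key]
  have h3 := mul_le_mul_of_nonneg_right hsc (by positivity : (0:ℝ) ≤ 2/c)
  have h4 : (1/2 : ℝ) * (2/c) = 1/c := by field_simp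
  linarith

/-- Bounds on M = max over |t| ≤ π/2 of f(zt/ε), where f(t) = Σ sin²(a_k t/2). -/
theorem max_level_bound (n : ℕ) (a : Fin n → ℝ) (ha : ∀ k, 1 ≤ a k)
    (z ε : ℝ) (hz : 1 ≤ z) (hε : 0 < ε) (hε' : ε < π / 4) :
    (n : ℝ) / 4 ≤ sSup ((fun t => ∑ k, Real.sin (a k * (z * t / ε) / 2) ^ 2) ''
        Set.Icc (-(π / 2)) (π / 2)) ∧
      sSup ((fun t => ∑ k, Real.sin (a k * (z * t / ε) / 2) ^ 2) ''
        Set.Icc (-(π / 2)) (π / 2)) ≤ n := by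
  have hπ := Real.pi_pos
  set f : ℝ → ℝ := fun t => ∑ k, Real.sin (a k * (z * t / ε) / 2) ^ 2 with hf
  have hfle : ∀ t, f t ≤ n := by
    intro t
    calc f t ≤ ∑ _k : Fin n, (1:ℝ) :=
        Finset.sum_le_sum fun k _ => Real.sin_sq_le_one _
      _ = n := by simp
  have hne : (f '' Set.Icc (-(π/2)) (π/2)).Nonempty :=
    ⟨f 0, ⟨0, ⟨by linarith, by linarith⟩, rfl⟩⟩
  have hbdd : BddAbove (f '' Set.Icc (-(π/2)) (π/2)) := by
    refine ⟨n, ?_⟩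
    rintro x ⟨t, _, rfl⟩
    exact hfle t
  have hcont : Continuous f := by
    apply continuous_finset_sum
    intro k _
    fun_prop
  constructor
  · -- lower bound via averaging
    have hub : ∀ t ∈ Set.Icc (-(π/2)) (π/2), f t ≤ sSup (f '' Set.Icc (-(π/2)) (π/2)) :=
      fun t ht => le_csSup hbdd ⟨t, ht, rfl⟩
    have hint : (n:ℝ) * (π/4) ≤ ∫ t in (-(π/2))..(π/2), f t := by
      rw [hf]
      rw [intervalIntegral.integral_finset_sum (fun k _ => (by fun_prop :
          Continuous fun t => Real.sin (a k * (z * t / ε) / 2) ^ 2).intervalIntegrable _ _)]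
      have : ∀ k : Fin n, π/4 ≤ ∫ t in (-(π/2))..(π/2),
          Real.sin (a k * (z * t / ε) / 2) ^ 2 := by
        intro k
        have heq : (fun t => Real.sin (a k * (z * t / ε) / 2) ^ 2)
            = fun t => Real.sin ((a k * z / ε) * t / 2) ^ 2 := by
          funext t; ring_nf
        rw [heq]
        apply aux_int
        have hak := ha k
        have h1 : (1:ℝ) ≤ a k * z := by nlinarith
        rw [div_le_div_iff₀ hπ hε]
        nlinarith
      calc (n:ℝ) * (π/4) = ∑ _k : Fin n, π/4 := by simp [mul_comm]
        _ ≤ _ := Finset.sum_le_sum fun k _ => this k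
    have hint2 : (∫ t in (-(π/2))..(π/2), f t)
        ≤ π * sSup (f '' Set.Icc (-(π/2)) (π/2)) := by
      have hmono := intervalIntegral.integral_mono_on (μ := MeasureTheory.volume) (by linarith : -(π/2) ≤ π/2)
        (hcont.intervalIntegrable _ _)
        ((continuous_const (y := sSup (f '' Set.Icc (-(π/2)) (π/2)))).intervalIntegrable _ _) hub
      have hconst : (∫ _t in (-(π/2))..(π/2), sSup (f '' Set.Icc (-(π/2)) (π/2)))
          = π * sSup (f '' Set.Icc (-(π/2)) (π/2)) := by
        rw [intervalIntegral.integral_const, smul_eq_mul]; ring_nf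
      rw [hconst] at hmono
      exact hmono
    nlinarith
  · exact Real.sSup_le (by rintro x ⟨t, _, rfl⟩; exact hfle t) (by positivity)
end

section
/- Let a ∈ R^n with 1 ≤ a_k ≤ K for all k, 0 < α < 1/(6K), and 0 < κ < n/2. If t_0, t_1 ∈ I_{α,κ}(a) with t_1 > t_0 + 3α, then t_1 − t_0 ≥ D_{2α,2κ}(a). -/
open Real

/-- The recurrence set I_{α,κ}(a). -/
def recSet (n : ℕ) (a : Fin n → ℝ) (α κ : ℝ) : Set ℝ :=
  {t | ∃ σ : Finset (Fin n), (n : ℝ) - κ ≤ σ.card ∧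
    ∀ k ∈ σ, ∃ p : ℤ, |t * a k - p| ≤ α}

/-- The essential least common denominator D_{α,κ}(a): the infimum of t > 0 such that all
except at most κ coordinates of ta are within α of nonzero integers. -/
noncomputable def essLCD (n : ℕ) (a : Fin n → ℝ) (α κ : ℝ) : ℝ :=
  sInf {t : ℝ | 0 < t ∧ ∃ σ : Finset (Fin n), (n : ℝ) - κ ≤ σ.card ∧
    ∀ k ∈ σ, ∃ p : ℤ, p ≠ 0 ∧ |t * a k - p| ≤ α}

/-- Gaps in the recurrence set, part 2: two recurrence times separated by more than 3α
are separated by at least D_{2α,2κ}(a). -/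
theorem recurrence_gap_lcd (n : ℕ) (a : Fin n → ℝ) (K α κ : ℝ)
    (ha : ∀ k, 1 ≤ a k ∧ a k ≤ K) (hα : 0 < α) (hα' : α < 1 / (6 * K))
    (hκ : 0 < κ) (hκn : κ < n / 2) (t₀ t₁ : ℝ)
    (ht₀ : t₀ ∈ recSet n a α κ) (ht₁ : t₁ ∈ recSet n a α κ)
    (hgt : t₀ + 3 * α < t₁) :
    essLCD n a (2 * α) (2 * κ) ≤ t₁ - t₀ := by
  obtain ⟨σ₀, hc₀, h₀⟩ := ht₀
  obtain ⟨σ₁, hc₁, h₁⟩ := ht₁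
  have hpos : 0 < t₁ - t₀ := by nlinarith
  apply csInf_le
  · exact ⟨0, fun x hx => le_of_lt hx.1⟩
  refine ⟨hpos, σ₀ ∩ σ₁, ?_, ?_⟩
  · have hsub : σ₀ ∪ σ₁ ⊆ Finset.univ := Finset.subset_univ _
    have hcard := Finset.card_le_card hsub
    have h := Finset.card_inter_add_card_union σ₀ σ₁
    have h2 : σ₀.card + σ₁.card - (n:ℝ) ≤ ((σ₀ ∩ σ₁).card : ℝ) := by
      have : (σ₀ ∪ σ₁).card ≤ n := by simpa using hcard
      have h' : ((σ₀ ∩ σ₁).card : ℝ) + (σ₀ ∪ σ₁).card = σ₀.card + σ₁.card := by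
        exact_mod_cast h
      have h'' : ((σ₀ ∪ σ₁).card : ℝ) ≤ n := by exact_mod_cast this
      linarith
    linarith
  · intro k hk
    obtain ⟨p₀, hp₀⟩ := h₀ k (Finset.mem_of_mem_inter_left hk)
    obtain ⟨p₁, hp₁⟩ := h₁ k (Finset.mem_of_mem_inter_right hk)
    refine ⟨p₁ - p₀, ?_, ?_⟩
    · intro heq
      have hpe : (p₁ : ℝ) = p₀ := by
        have : p₁ = p₀ := by omega
        exact_mod_cast this
      have hak := (ha k).1
      have hbig : 3 * α < (t₁ - t₀) * a k := by nlinarith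
      have := abs_sub_abs_le_abs_sub (t₁ * a k - p₁) (t₀ * a k - p₀)
      have habs : |(t₁ - t₀) * a k| ≤ 2 * α := by
        have : |(t₁ * a k - p₁) - (t₀ * a k - p₀)| ≤ 2 * α :=
          le_trans (abs_sub _ _) (by linarith)
        have h3 : (t₁ * a k - p₁) - (t₀ * a k - p₀) = (t₁ - t₀) * a k := by
          rw [hpe]; ring
        rwa [h3] at this
      have := le_abs_self ((t₁ - t₀) * a k)
      linarith
    · have h3 : (t₁ - t₀) * a k - ((p₁ - p₀ : ℤ) : ℝ) =
          (t₁ * a k - p₁) - (t₀ * a k - p₀) := by push_cast; ring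
      rw [h3]
      calc |(t₁ * a k - p₁) - (t₀ * a k - p₀)| ≤ |t₁ * a k - p₁| + |t₀ * a k - p₀| :=
            abs_sub _ _
        _ ≤ 2 * α := by linarith
end

section
/- Let a ∈ R^n with 1 ≤ a_k ≤ K for all k, 0 < α < 1/(6K), and 0 < κ < n/2. Then for every y > 0 the density of the recurrence set satisfies dens(I_{α,κ}(a), y) ≤ 3α (1/(2y) + 2/D_{2α,2κ}(a)), where dens(I, y) := |I ∩ [−y, y]| / (2y) and |·| denotes Lebesgue measure. -/
open Real MeasureTheory

/-- Covering lemma: if any two points of `J` are within `2α` or at least `D` apart,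
then the measure of `J ∩ [-y, y]` is at most `2α (2y/D + 1)`. -/
lemma cover_bound (J : Set ℝ) (y α D : ℝ) (hy : 0 < y) (hα : 0 ≤ α) (hD : 2*α < D)
    (hpair : ∀ s ∈ J, ∀ t ∈ J, |s - t| ≤ 2*α ∨ D ≤ |s - t|) :
    (volume (J ∩ Set.Icc (-y) y)).toReal ≤ 2*α*(2*y/D + 1) := by
  have hD0 : 0 < D := lt_of_le_of_lt (by positivity) hD
  set M := ⌈2*y/D⌉₊ with hM
  -- each slice has small measure
  have hslice : ∀ c : ℝ, volume (J ∩ Set.Ico c (c + D)) ≤ ENNReal.ofReal (2*α) := by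
    intro c
    rcases (J ∩ Set.Ico c (c + D)).eq_empty_or_nonempty with he | hne
    · simp [he]
    · set T := J ∩ Set.Ico c (c + D) with hT
      have hbdd : BddBelow T := ⟨c, fun x hx => hx.2.1⟩
      set u := sInf T with hu
      have hsub : T ⊆ Set.Icc u (u + 2*α) := by
        intro s hs
        refine ⟨csInf_le hbdd hs, ?_⟩
        by_contra hcon
        push_neg at hcon
        have h1 : sInf T < s - 2*α := by linarith
        obtain ⟨s', hs'T, hs'⟩ := (csInf_lt_iff hbdd hne).mp h1
        have h2 : 2*α < |s - s'| := by
          rw [abs_of_nonneg (by linarith)]; linarith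
        rcases hpair s hs.1 s' hs'T.1 with h | h
        · linarith
        · have h3 : s - s' < D := by
            have := hs.2.2; have := hs'T.2.1; linarith
          rw [abs_of_nonneg (by linarith)] at h
          linarith
      calc volume T ≤ volume (Set.Icc u (u + 2*α)) := measure_mono hsub
        _ = ENNReal.ofReal (2*α) := by rw [Real.volume_Icc]; ring_nf
  -- covering
  have hsub : J ∩ Set.Icc (-y) y ⊆
      (⋃ j ∈ Finset.range M, J ∩ Set.Ico (-y + j*D) (-y + j*D + D)) ∪ {y} := by
    intro x hx
    by_cases hxy : x = y
    · exact Or.inr (by simp [hxy])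
    · left
      have hxlt : x < y := lt_of_le_of_ne hx.2.2 hxy
      have hxy0 : 0 ≤ x + y := by have := hx.2.1; linarith
      set j := ⌊(x+y)/D⌋₊ with hj
      have hjx : (j:ℝ) ≤ (x+y)/D := Nat.floor_le (by positivity)
      have hjx' : (x+y)/D < j + 1 := Nat.lt_floor_add_one _
      have hjM : j < M := by
        have h1 : (x+y)/D < 2*y/D := by gcongr <;> linarith
        have h2 : 2*y/D ≤ (M:ℝ) := Nat.le_ceil _
        exact_mod_cast lt_of_le_of_lt hjx (lt_of_lt_of_le h1 h2)
      refine Set.mem_biUnion (Finset.mem_range.mpr hjM) ⟨hx.1, ?_, ?_⟩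
      · have : (j:ℝ)*D ≤ x + y := by
          rw [← le_div_iff₀ hD0]; exact hjx
        linarith
      · have : x + y < ((j:ℝ) + 1)*D := by
          rw [← div_lt_iff₀ hD0]; exact hjx'
        linarith
  have hvol : volume (J ∩ Set.Icc (-y) y) ≤ ENNReal.ofReal ((M:ℝ) * (2*α)) := by
    calc volume (J ∩ Set.Icc (-y) y)
        ≤ volume ((⋃ j ∈ Finset.range M, J ∩ Set.Ico (-y + j*D) (-y + j*D + D)) ∪ {y}) :=
          measure_mono hsub
      _ ≤ volume (⋃ j ∈ Finset.range M, J ∩ Set.Ico (-y + j*D) (-y + j*D + D)) + volume {y} :=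
          measure_union_le _ _
      _ = volume (⋃ j ∈ Finset.range M, J ∩ Set.Ico (-y + j*D) (-y + j*D + D)) := by
          simp
      _ ≤ ∑ j ∈ Finset.range M, volume (J ∩ Set.Ico (-y + j*D) (-y + j*D + D)) :=
          measure_biUnion_finset_le _ _
      _ ≤ ∑ j ∈ Finset.range M, ENNReal.ofReal (2*α) :=
          Finset.sum_le_sum (fun j _ => hslice _)
      _ = (M : ENNReal) * ENNReal.ofReal (2*α) := by
          rw [Finset.sum_const, Finset.card_range, nsmul_eq_mul]
      _ = ENNReal.ofReal ((M:ℝ) * (2*α)) := by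
          rw [ENNReal.ofReal_mul (Nat.cast_nonneg M), ENNReal.ofReal_natCast]
  have h1 : (volume (J ∩ Set.Icc (-y) y)).toReal ≤ (M:ℝ) * (2*α) :=
    ENNReal.toReal_le_of_le_ofReal (by positivity) hvol
  have h2 : (M:ℝ) < 2*y/D + 1 := Nat.ceil_lt_add_one (by positivity)
  nlinarith

/-- Dichotomy: two points of the recurrence set with `s < t` are either within `2α`,
or their difference satisfies the defining property of the essLCD set at `(2α, 2κ)`. -/
lemma rec_pair_aux {n : ℕ} {a : Fin n → ℝ} {α κ : ℝ} (ha1 : ∀ k, 1 ≤ a k)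
    {s t : ℝ} (hst : s < t) (hs : s ∈ recSet n a α κ) (ht : t ∈ recSet n a α κ) :
    t - s ≤ 2*α ∨ (0 < t - s ∧ ∃ σ : Finset (Fin n), (n:ℝ) - 2*κ ≤ σ.card ∧
      ∀ k ∈ σ, ∃ p : ℤ, p ≠ 0 ∧ |(t - s) * a k - p| ≤ 2*α) := by
  obtain ⟨σs, hcs, hs'⟩ := hs
  obtain ⟨σt, hct, ht'⟩ := ht
  choose! ps hps using hs'
  choose! qt hqt using ht'
  set τ := σs ∩ σt with hτ
  have hτcard : (n:ℝ) - 2*κ ≤ τ.card := by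
    have h1 : σs.card + σt.card = (σs ∪ σt).card + τ.card :=
      (Finset.card_union_add_card_inter _ _).symm
    have h2 : (σs ∪ σt).card ≤ n := by
      simpa using Finset.card_le_univ (σs ∪ σt)
    have h1' : (σs.card : ℝ) + σt.card = ((σs ∪ σt).card : ℝ) + τ.card := by
      exact_mod_cast h1
    have h2' : ((σs ∪ σt).card : ℝ) ≤ n := by exact_mod_cast h2
    linarith
  by_cases hz : ∃ k ∈ τ, qt k = ps k
  · left
    obtain ⟨k, hk, he⟩ := hz
    have hks : k ∈ σs := Finset.mem_of_mem_inter_left hk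
    have hkt : k ∈ σt := Finset.mem_of_mem_inter_right hk
    have h1 := abs_le.mp (hps k hks)
    have h2 := abs_le.mp (hqt k hkt)
    have h3 : (t - s) * a k ≤ 2*α := by
      have : ((qt k : ℝ)) = ps k := by exact_mod_cast he
      nlinarith [h1.1, h1.2, h2.1, h2.2]
    nlinarith [ha1 k, h3, sub_pos.mpr hst]
  · right
    push_neg at hz
    refine ⟨by linarith, τ, hτcard, fun k hk => ?_⟩
    have hks : k ∈ σs := Finset.mem_of_mem_inter_left hk
    have hkt : k ∈ σt := Finset.mem_of_mem_inter_right hk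
    refine ⟨qt k - ps k, sub_ne_zero.mpr (hz k hk), ?_⟩
    have h1 := abs_le.mp (hps k hks)
    have h2 := abs_le.mp (hqt k hkt)
    rw [abs_le]
    push_cast
    constructor <;> nlinarith [h1.1, h1.2, h2.1, h2.2]

/-- Density of the recurrence set via the essential LCD:
dens(I_{α,κ}(a), y) ≤ 3α (1/(2y) + 2/D_{2α,2κ}(a)). -/
theorem density_recurrence_set (n : ℕ) (a : Fin n → ℝ) (K α κ : ℝ)
    (ha : ∀ k, 1 ≤ a k ∧ a k ≤ K) (hα : 0 < α) (hα' : α < 1 / (6 * K))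
    (hκ : 0 < κ) (hκn : κ < n / 2) (y : ℝ) (hy : 0 < y) :
    (volume (recSet n a α κ ∩ Set.Icc (-y) y)).toReal / (2 * y) ≤
      3 * α * (1 / (2 * y) + 2 / essLCD n a (2 * α) (2 * κ)) := by
  have hn : 0 < n := by
    have : (0:ℝ) < n := by linarith
    exact_mod_cast this
  have hK : 1 ≤ K := le_trans (ha ⟨0, hn⟩).1 (ha ⟨0, hn⟩).2
  have hK0 : 0 < K := by linarith
  have h6K : α * (6*K) < 1 := (lt_div_iff₀ (by positivity)).mp hα'
  have hα6 : α < 1/6 := by nlinarith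
  have h2y : 0 < 2*y := by linarith
  -- the defining set of the essLCD
  set S := {t : ℝ | 0 < t ∧ ∃ σ : Finset (Fin n), (n : ℝ) - 2*κ ≤ σ.card ∧
    ∀ k ∈ σ, ∃ p : ℤ, p ≠ 0 ∧ |t * a k - p| ≤ 2*α} with hS
  have hess : essLCD n a (2*α) (2*κ) = sInf S := rfl
  have hpairS : ∀ s ∈ recSet n a α κ, ∀ t ∈ recSet n a α κ,
      |s - t| ≤ 2*α ∨ |s - t| ∈ S := by
    intro s hs t ht
    rcases lt_trichotomy s t with h | h | h
    · rcases rec_pair_aux (fun k => (ha k).1) h hs ht with h' | ⟨h0, σ, hc, hm⟩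
      · left; rw [abs_sub_comm, abs_of_pos (by linarith)]; linarith
      · right; rw [abs_sub_comm, abs_of_pos (by linarith)]; exact ⟨h0, σ, hc, hm⟩
    · left; simp [h]; positivity
    · rcases rec_pair_aux (fun k => (ha k).1) h ht hs with h' | ⟨h0, σ, hc, hm⟩
      · left; rw [abs_of_pos (by linarith)]; linarith
      · right; rw [abs_of_pos (by linarith)]; exact ⟨h0, σ, hc, hm⟩
  rcases S.eq_empty_or_nonempty with hSe | hSne
  · -- S empty: essLCD = 0, all points within 2α
    have hD0 : essLCD n a (2*α) (2*κ) = 0 := by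
      rw [hess, hSe, Real.sInf_empty]
    rw [hD0, div_zero, add_zero]
    have hpair' : ∀ s ∈ recSet n a α κ, ∀ t ∈ recSet n a α κ,
        |s - t| ≤ 2*α ∨ (8*y+1) ≤ |s - t| := by
      intro s hs t ht
      rcases hpairS s hs t ht with h | h
      · exact Or.inl h
      · rw [hSe] at h; exact absurd h (Set.notMem_empty _)
    have hcb := cover_bound (recSet n a α κ) y α (8*y+1) hy hα.le (by linarith) hpair'
    rw [div_le_iff₀ h2y]
    have hq : 2*y/(8*y+1) ≤ 1/2 := by
      rw [div_le_iff₀ (by linarith)]; linarith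
    have h1 : 1/(2*y) * (2*y) = 1 := by field_simp
    have he : 3 * α * (1/(2*y)) * (2*y) = 3*α*(1/(2*y)*(2*y)) := by ring
    rw [he, h1]
    nlinarith
  · -- S nonempty: essLCD ≥ (1-2α)/K > 2α
    have hDlb : ∀ x ∈ S, (1-2*α)/K ≤ x := by
      rintro x ⟨hx0, σ, hc, hm⟩
      have hσne : σ.Nonempty := by
        rw [← Finset.card_pos]
        have hcard0 : (0:ℝ) < σ.card := by linarith
        exact_mod_cast hcard0
      obtain ⟨k, hk⟩ := hσne
      obtain ⟨p, hp0, hpc⟩ := hm k hk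
      have hak := (ha k).1
      have haK := (ha k).2
      have hp1 : (1:ℝ) ≤ |(p:ℝ)| := by
        rw [← Int.cast_abs]
        exact_mod_cast Int.one_le_abs hp0
      have h1 := abs_le.mp hpc
      have hxa : 0 < x * a k := by positivity
      -- p must be ≥ 1 (since x * a k > 0 and 2α < 1)
      have hxa1 : 1 - 2*α ≤ x * a k := by
        rcases abs_cases (p:ℝ) with ⟨he, _⟩ | ⟨he, _⟩
        · nlinarith [h1.1]
        · nlinarith [h1.2]
      rw [div_le_iff₀ hK0]
      nlinarith
    set D := essLCD n a (2*α) (2*κ) with hD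
    have hD1 : (1-2*α)/K ≤ D := by rw [hess]; exact le_csInf hSne hDlb
    have h2αD : 2*α < D := by
      have : 2*α < (1-2*α)/K := by
        rw [lt_div_iff₀ hK0]; nlinarith
      linarith
    have hDpos : 0 < D := lt_trans (by positivity) h2αD
    have hpair' : ∀ s ∈ recSet n a α κ, ∀ t ∈ recSet n a α κ,
        |s - t| ≤ 2*α ∨ D ≤ |s - t| := by
      intro s hs t ht
      rcases hpairS s hs t ht with h | h
      · exact Or.inl h
      · right; rw [hess]
        exact csInf_le ⟨0, fun x hx => hx.1.le⟩ h
    have hcb := cover_bound (recSet n a α κ) y α D hy hα.le h2αD hpair'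
    rw [div_le_iff₀ h2y]
    have he1 : 2*y/D = 2*y*(1/D) := by ring
    have he2 : 2/D = 2*(1/D) := by ring
    have hinv : 0 < 1/D := by positivity
    calc (volume (recSet n a α κ ∩ Set.Icc (-y) y)).toReal
        ≤ 2*α*(2*y/D + 1) := hcb
      _ ≤ 3 * α * (1 / (2 * y) + 2 / D) * (2 * y) := by
          rw [he1, he2]
          have h1 : 1/(2*y) * (2*y) = 1 := by field_simp
          have he : 3*α*(1/(2*y) + 2*(1/D))*(2*y)
              = 3*α*(1/(2*y)*(2*y)) + 12*α*(1/D)*y := by ring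
          rw [he, h1]
          nlinarith [mul_pos (mul_pos hα hy) hinv]
end

section
/- For every random variable S and every ε > 0, sup_{v ∈ R} P(|S − v| ≤ ε) ≤ C ∫_{−π/2}^{π/2} |φ(t/ε)| dt, where φ(t) = E exp(iSt) is the characteristic function of S and C is an absolute constant. -/
open MeasureTheory ProbabilityTheory Real


private lemma esseen_cont (x : ℝ) : Continuous (fun t : ℝ => (1 - 2/π*|t|) * Real.cos (x*t)) := by
  fun_prop

private lemma esseen_J_eq (x : ℝ) (hx : x ≠ 0) :
    (∫ t in (-(π/2))..(π/2), (1 - 2/π*|t|) * Real.cos (x*t)) =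
      4/(π*x^2) * (1 - Real.cos (π*x/2)) := by
  have hπ := Real.pi_pos
  have hπ' : (π:ℝ) ≠ 0 := ne_of_gt hπ
  have hcont : ∀ a b : ℝ, IntervalIntegrable (fun t => (1 - 2/π*|t|) * Real.cos (x*t)) volume a b :=
    fun a b => (esseen_cont x).intervalIntegrable a b
  rw [← intervalIntegral.integral_add_adjacent_intervals (hcont (-(π/2)) 0) (hcont 0 (π/2))]
  have hleft : (∫ t in (-(π/2))..(0:ℝ), (1 - 2/π*|t|) * Real.cos (x*t))
      = ∫ t in (-(π/2))..(0:ℝ), (1 + 2/π*t) * Real.cos (x*t) := by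
    apply intervalIntegral.integral_congr
    intro t ht
    rw [Set.uIcc_of_le (by linarith : -(π/2) ≤ (0:ℝ))] at ht
    show (1 - 2/π*|t|) * Real.cos (x*t) = (1 + 2/π*t) * Real.cos (x*t)
    rw [abs_of_nonpos ht.2]
    ring
  have hright : (∫ t in (0:ℝ)..(π/2), (1 - 2/π*|t|) * Real.cos (x*t))
      = ∫ t in (0:ℝ)..(π/2), (1 - 2/π*t) * Real.cos (x*t) := by
    apply intervalIntegral.integral_congr
    intro t ht
    rw [Set.uIcc_of_le (by linarith : (0:ℝ) ≤ π/2)] at ht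
    show (1 - 2/π*|t|) * Real.cos (x*t) = (1 - 2/π*t) * Real.cos (x*t)
    rw [abs_of_nonneg ht.1]
  rw [hleft, hright]
  have hxt : ∀ t : ℝ, HasDerivAt (fun t : ℝ => x * t) x t := fun t => by
    simpa using (hasDerivAt_id t).const_mul x
  have hL : (∫ t in (-(π/2))..(0:ℝ), (1 + 2/π*t) * Real.cos (x*t))
      = 2/(π*x^2) - 2*Real.cos (π*x/2)/(π*x^2) := by
    have key : ∀ t : ℝ, HasDerivAt
        (fun t => (1 + 2/π*t) * (Real.sin (x*t)/x) + 2 * Real.cos (x*t)/(π*x^2))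
        ((1 + 2/π*t) * Real.cos (x*t)) t := by
      intro t
      have hsin : HasDerivAt (fun t => Real.sin (x*t)) (Real.cos (x*t) * x) t :=
        (Real.hasDerivAt_sin (x*t)).comp t (hxt t)
      have hcos : HasDerivAt (fun t => Real.cos (x*t)) (-Real.sin (x*t) * x) t :=
        (Real.hasDerivAt_cos (x*t)).comp t (hxt t)
      have h1 : HasDerivAt (fun t : ℝ => 1 + 2/π*t) (2/π) t := by
        simpa using ((hasDerivAt_id t).const_mul (2/π)).const_add 1
      have := ((h1.mul (hsin.div_const x)).add ((hcos.const_mul 2).div_const (π*x^2)))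
      refine this.congr_deriv ?_
      field_simp
      ring
    rw [intervalIntegral.integral_eq_sub_of_hasDerivAt (fun t _ => key t)
      ((by fun_prop : Continuous fun t : ℝ => (1 + 2/π*t) * Real.cos (x*t)).intervalIntegrable _ _)]
    have e1 : x * -(π/2) = -(π*x/2) := by ring
    rw [e1, Real.cos_neg, Real.sin_neg]
    have e0 : (1 + 2/π * -(π/2)) = 0 := by field_simp; try ring
    rw [e0]
    simp only [Real.sin_zero, Real.cos_zero, zero_mul, mul_zero, mul_one, sub_zero, zero_add, zero_sub, zero_div, neg_neg, neg_zero]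
    try ring
  have hR : (∫ t in (0:ℝ)..(π/2), (1 - 2/π*t) * Real.cos (x*t))
      = 2/(π*x^2) - 2*Real.cos (π*x/2)/(π*x^2) := by
    have key : ∀ t : ℝ, HasDerivAt
        (fun t => (1 - 2/π*t) * (Real.sin (x*t)/x) - 2 * Real.cos (x*t)/(π*x^2))
        ((1 - 2/π*t) * Real.cos (x*t)) t := by
      intro t
      have hsin : HasDerivAt (fun t => Real.sin (x*t)) (Real.cos (x*t) * x) t :=
        (Real.hasDerivAt_sin (x*t)).comp t (hxt t)
      have hcos : HasDerivAt (fun t => Real.cos (x*t)) (-Real.sin (x*t) * x) t :=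
        (Real.hasDerivAt_cos (x*t)).comp t (hxt t)
      have h1 : HasDerivAt (fun t : ℝ => 1 - 2/π*t) (-(2/π)) t := by
        simpa using ((hasDerivAt_id t).const_mul (2/π)).const_sub 1
      have := ((h1.mul (hsin.div_const x)).sub ((hcos.const_mul 2).div_const (π*x^2)))
      refine this.congr_deriv ?_
      field_simp
      ring
    rw [intervalIntegral.integral_eq_sub_of_hasDerivAt (fun t _ => key t)
      ((by fun_prop : Continuous fun t : ℝ => (1 - 2/π*t) * Real.cos (x*t)).intervalIntegrable _ _)]
    have e1 : x * (π/2) = π*x/2 := by ring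
    rw [e1]
    have e0 : (1 - 2/π * (π/2)) = 0 := by field_simp; try ring
    rw [e0]
    simp only [Real.sin_zero, Real.cos_zero, zero_mul, mul_zero, mul_one, sub_zero, zero_add, zero_sub, zero_div, neg_neg, neg_zero]
    try ring
  rw [hL, hR]
  ring


private lemma esseen_J_nonneg (x : ℝ) :
    0 ≤ ∫ t in (-(π/2))..(π/2), (1 - 2/π*|t|) * Real.cos (x*t) := by
  have hπ := Real.pi_pos
  rcases eq_or_ne x 0 with h|h
  · subst h
    apply intervalIntegral.integral_nonneg (by linarith)
    intro u hu
    show 0 ≤ (1 - 2/π*|u|) * Real.cos (0*u)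
    have h1 : |u| ≤ π/2 := abs_le.2 ⟨hu.1, hu.2⟩
    have h2 : 2/π*|u| ≤ 1 := by
      rw [div_mul_eq_mul_div, div_le_one hπ]; linarith
    simp only [zero_mul, Real.cos_zero, mul_one]
    linarith
  · rw [esseen_J_eq x h]
    have := Real.cos_le_one (π*x/2)
    have h4 : (0:ℝ) ≤ 4/(π*x^2) := by positivity
    nlinarith

private lemma esseen_J_ge (x : ℝ) (hx : |x| ≤ 1) :
    4/π ≤ ∫ t in (-(π/2))..(π/2), (1 - 2/π*|t|) * Real.cos (x*t) := by
  have hπ := Real.pi_pos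
  have h1 : (∫ t in (-(π/2))..(π/2), (1 - 2/π*|t|) * Real.cos (1*t)) = 4/π := by
    rw [esseen_J_eq 1 one_ne_zero]
    rw [show π*1/2 = π/2 by ring, Real.cos_pi_div_two]
    norm_num
  rw [← h1]
  apply intervalIntegral.integral_mono_on (by linarith)
    ((by fun_prop : Continuous fun t : ℝ => (1 - 2/π*|t|) * Real.cos (1*t)).intervalIntegrable _ _)
    ((esseen_cont x).intervalIntegrable _ _)
  intro t ht
  show (1 - 2/π*|t|) * Real.cos (1*t) ≤ (1 - 2/π*|t|) * Real.cos (x*t)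
  have h2 : |t| ≤ π/2 := abs_le.2 ⟨ht.1, ht.2⟩
  have hw : 0 ≤ 1 - 2/π*|t| := by
    have : 2/π*|t| ≤ 1 := by rw [div_mul_eq_mul_div, div_le_one hπ]; linarith
    linarith
  apply mul_le_mul_of_nonneg_left _ hw
  rw [← Real.cos_abs (1*t), ← Real.cos_abs (x*t)]
  apply Real.cos_le_cos_of_nonneg_of_le_pi (abs_nonneg _)
  · rw [one_mul]; linarith
  · rw [abs_mul, abs_mul, abs_one, one_mul]
    exact mul_le_of_le_one_left (abs_nonneg _) hx

private lemma esseen_exp_integrable {Ω : Type} [MeasurableSpace Ω] (μ : Measure Ω)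
    [IsProbabilityMeasure μ] {g : Ω → ℝ} (hg : Measurable g) :
    Integrable (fun ω => Complex.exp (Complex.I * (g ω : ℂ))) μ := by
  refine Integrable.mono' (integrable_const 1) ?_ (ae_of_all _ fun ω => ?_)
  · exact (Complex.measurable_exp.comp
      ((Complex.measurable_ofReal.comp hg).const_mul Complex.I)).aestronglyMeasurable
  · rw [mul_comm, Complex.norm_exp_ofReal_mul_I]

private lemma esseen_cos_integrable {Ω : Type} [MeasurableSpace Ω] (μ : Measure Ω)
    [IsProbabilityMeasure μ] {g : Ω → ℝ} (hg : Measurable g) :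
    Integrable (fun ω => Real.cos (g ω)) μ := by
  refine Integrable.mono' (integrable_const 1) ?_ (ae_of_all _ fun ω => ?_)
  · exact (Real.measurable_cos.comp hg).aestronglyMeasurable
  · rw [Real.norm_eq_abs]; exact Real.abs_cos_le_one _

/-- Esséen's inequality: the concentration function of S is bounded by the integral of
the modulus of its characteristic function over a bounded interval. -/
theorem esseen_inequality :
    ∃ C : ℝ, 0 < C ∧
      ∀ (Ω : Type) [MeasurableSpace Ω] (μ : Measure Ω) [IsProbabilityMeasure μ]
        (S : Ω → ℝ), Measurable S → ∀ ε : ℝ, 0 < ε →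
      (⨆ v : ℝ, μ {ω | |S ω - v| ≤ ε}) ≤
        ENNReal.ofReal (C * ∫ t in (-(π / 2))..(π / 2),
          ‖∫ ω, Complex.exp (Complex.I * (S ω * (t / ε))) ∂μ‖) := by
  have hπ := Real.pi_pos
  refine ⟨π/4, by positivity, ?_⟩
  intro Ω _ μ _ S hS ε hε
  refine iSup_le fun v => ?_
  have hle : -(π/2) ≤ π/2 := by linarith
  set T : Set ℝ := Set.Ioc (-(π/2)) (π/2) with hT
  set φ : ℝ → ℂ := fun t => ∫ ω, Complex.exp (Complex.I * (S ω * (t/ε))) ∂μ with hφ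
  set A : Set Ω := {ω | |S ω - v| ≤ ε} with hA
  have hAm : MeasurableSet A :=
    measurableSet_le ((hS.sub measurable_const).abs) measurable_const
  set x : Ω → ℝ := fun ω => (S ω - v)/ε with hxdef
  have hxm : Measurable x := (hS.sub measurable_const).div_const ε
  set g : Ω × ℝ → ℝ := fun p => (1 - 2/π*|p.2|) * Real.cos (x p.1 * p.2) with hgdef
  have hgm : Measurable g := by
    apply Measurable.mul
    · exact measurable_const.sub (measurable_const.mul measurable_snd.abs)
    · exact Real.measurable_cos.comp ((hxm.comp measurable_fst).mul measurable_snd)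
  haveI : IsFiniteMeasure (volume.restrict T) := by
    constructor
    rw [Measure.restrict_apply_univ, hT, Real.volume_Ioc]
    exact ENNReal.ofReal_lt_top
  have hgbdd : ∀ᵐ p ∂(μ.prod (volume.restrict T)), ‖g p‖ ≤ 1 := by
    have heq : μ.prod (volume.restrict T) = (μ.prod volume).restrict (Set.univ ×ˢ T) := by
      rw [← Measure.prod_restrict, Measure.restrict_univ]
    rw [heq]
    filter_upwards [ae_restrict_mem (MeasurableSet.univ.prod measurableSet_Ioc)] with p hp
    have hp2 : p.2 ∈ T := hp.2
    have h2 : |p.2| ≤ π/2 := abs_le.2 ⟨le_of_lt hp2.1, hp2.2⟩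
    have hw0 : 0 ≤ 1 - 2/π*|p.2| := by
      have : 2/π*|p.2| ≤ 1 := by rw [div_mul_eq_mul_div, div_le_one hπ]; linarith
      linarith
    rw [Real.norm_eq_abs]
    show |(1 - 2/π*|p.2|) * Real.cos (x p.1 * p.2)| ≤ 1
    rw [abs_mul, abs_of_nonneg hw0]
    have hc := Real.abs_cos_le_one (x p.1 * p.2)
    have hw1 : 1 - 2/π*|p.2| ≤ 1 := by
      have h0 : 0 ≤ 2/π*|p.2| := by positivity
      linarith
    have := mul_le_mul hw1 hc (abs_nonneg _) zero_le_one
    linarith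
  have hgint : Integrable g (μ.prod (volume.restrict T)) :=
    Integrable.mono' (integrable_const 1) hgm.aestronglyMeasurable hgbdd
  set F : Ω → ℝ := fun ω => ∫ t, g (ω, t) ∂(volume.restrict T) with hFdef
  have hFint : Integrable F μ := hgint.integral_prod_left
  have hFJ : ∀ ω, F ω = ∫ t in (-(π/2))..(π/2), (1 - 2/π*|t|) * Real.cos (x ω * t) := by
    intro ω
    rw [intervalIntegral.integral_of_le hle]
  have hF0 : ∀ ω, 0 ≤ F ω := fun ω => by rw [hFJ]; exact esseen_J_nonneg _
  have hFA : ∀ ω ∈ A, 4/π ≤ F ω := by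
    intro ω hω
    rw [hFJ]
    apply esseen_J_ge
    rw [hxdef]
    show |(S ω - v)/ε| ≤ 1
    rw [abs_div, abs_of_pos hε, div_le_one hε]
    exact hω
  have step1 : 4/π * (μ A).toReal ≤ ∫ ω, F ω ∂μ :=
    calc 4/π * (μ A).toReal ≤ ∫ ω in A, F ω ∂μ :=
          setIntegral_ge_of_const_le_real hAm (measure_ne_top μ A) hFA hFint.integrableOn
      _ ≤ ∫ ω, F ω ∂μ := setIntegral_le_integral hFint (ae_of_all _ hF0)
  -- Step 2
  have hφsm : StronglyMeasurable φ := by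
    have hk : Measurable (fun p : ℝ × Ω => Complex.exp (Complex.I * (S p.2 * (p.1/ε)))) := by
      apply Complex.measurable_exp.comp
      apply Measurable.const_mul
      exact ((Complex.measurable_ofReal.comp (hS.comp measurable_snd)).mul
        ((Complex.measurable_ofReal.comp measurable_fst).div_const _))
    exact hk.stronglyMeasurable.integral_prod_right'
  have hφle : ∀ t : ℝ, ‖φ t‖ ≤ 1 := by
    intro t
    calc ‖φ t‖ ≤ ∫ ω, ‖Complex.exp (Complex.I * (S ω * (t/ε)))‖ ∂μ :=
          norm_integral_le_integral_norm _
      _ = ∫ _ω, (1:ℝ) ∂μ := by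
          apply integral_congr_ae
          apply ae_of_all
          intro ω
          show ‖Complex.exp (Complex.I * (S ω * (t/ε)))‖ = (1:ℝ)
          have heq2 : Complex.I * (S ω * (t/ε)) = ((S ω * (t/ε) : ℝ) : ℂ) * Complex.I := by
            push_cast; ring
          rw [heq2, Complex.norm_exp_ofReal_mul_I]
      _ = 1 := by simp
  have habsint : Integrable (fun t => ‖φ t‖) (volume.restrict T) := by
    refine Integrable.mono' (integrable_const 1) ?_ (ae_of_all _ fun t => ?_)
    · exact (continuous_norm.comp_stronglyMeasurable hφsm).aestronglyMeasurable
    · rw [Real.norm_eq_abs, abs_of_nonneg (norm_nonneg _)]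
      exact hφle t
  have hinner : Integrable (fun t => ∫ ω, g (ω, t) ∂μ) (volume.restrict T) :=
    hgint.integral_prod_right
  have hpt : ∀ t ∈ T, (∫ ω, g (ω, t) ∂μ) ≤ ‖φ t‖ := by
    intro t ht
    have h2 : |t| ≤ π/2 := abs_le.2 ⟨le_of_lt ht.1, ht.2⟩
    have hw : abs (1 - 2/π*|t|) ≤ 1 := by
      rw [abs_le]
      have h3 : 2/π*|t| ≤ 1 := by rw [div_mul_eq_mul_div, div_le_one hπ]; linarith
      have h4 : 0 ≤ 2/π*|t| := by positivity
      constructor <;> linarith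
    set r : Ω → ℝ := fun ω => (S ω - v) * (t/ε) with hrdef
    have hrm : Measurable r := (hS.sub measurable_const).mul_const _
    set c : ℂ := ∫ ω, Complex.exp (Complex.I * (r ω : ℂ)) ∂μ with hcdef
    have hci : Integrable (fun ω => Complex.exp (Complex.I * (r ω : ℂ))) μ :=
      esseen_exp_integrable μ hrm
    have hgsplit : ∀ ω, g (ω, t) = (1 - 2/π*|t|) * Real.cos (r ω) := by
      intro ω
      show (1 - 2/π*|t|) * Real.cos (x ω * t) = (1 - 2/π*|t|) * Real.cos (r ω)
      have : x ω * t = r ω := by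
        rw [hxdef, hrdef]
        field_simp
      rw [this]
    have hcos_re : ∫ ω, Real.cos (r ω) ∂μ = c.re := by
      have h1 : (fun ω => Real.cos (r ω))
          = fun ω => RCLike.re (Complex.exp (Complex.I * (r ω : ℂ))) := by
        funext ω
        rw [mul_comm]
        rw [show (RCLike.re (Complex.exp ((r ω : ℂ) * Complex.I)) : ℝ)
          = (Complex.exp ((r ω : ℂ) * Complex.I)).re from rfl]
        rw [Complex.exp_ofReal_mul_I_re]
      rw [h1, integral_re hci]
      rfl
    have hcphi : ‖c‖ = ‖φ t‖ := by
      have hsplit : c = Complex.exp (Complex.I * ((-(v * (t/ε)) : ℝ) : ℂ)) * φ t := by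
        rw [hcdef, hφ]
        rw [← integral_const_mul]
        apply integral_congr_ae
        apply ae_of_all
        intro ω
        show Complex.exp (Complex.I * ((r ω : ℝ) : ℂ))
          = Complex.exp (Complex.I * ((-(v * (t/ε)) : ℝ) : ℂ))
            * Complex.exp (Complex.I * (S ω * (t/ε)))
        rw [← Complex.exp_add]
        congr 1
        have hc1 : ((r ω : ℝ) : ℂ) = ((-(v * (t/ε)) : ℝ) : ℂ) + (S ω : ℂ) * ((t : ℂ)/(ε : ℂ)) := by
          show (((S ω - v) * (t/ε) : ℝ) : ℂ) = _
          push_cast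
          ring
        rw [hc1]
        ring
      rw [hsplit, norm_mul]
      rw [show Complex.I * ((-(v * (t/ε)) : ℝ) : ℂ) = ((-(v * (t/ε)) : ℝ) : ℂ) * Complex.I
        from mul_comm _ _]
      rw [Complex.norm_exp_ofReal_mul_I, one_mul]
    calc (∫ ω, g (ω, t) ∂μ) = (1 - 2/π*|t|) * ∫ ω, Real.cos (r ω) ∂μ := by
          simp_rw [hgsplit]
          exact integral_const_mul _ _
      _ ≤ |(1 - 2/π*|t|) * ∫ ω, Real.cos (r ω) ∂μ| := le_abs_self _
      _ = abs (1 - 2/π*|t|) * |∫ ω, Real.cos (r ω) ∂μ| := abs_mul _ _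
      _ ≤ 1 * |c.re| := by
          rw [hcos_re]
          exact mul_le_mul_of_nonneg_right hw (abs_nonneg _)
      _ = |c.re| := one_mul _
      _ ≤ ‖c‖ := Complex.abs_re_le_norm c
      _ = ‖φ t‖ := hcphi
  have step2 : (∫ ω, F ω ∂μ) ≤ ∫ t in (-(π/2))..(π/2), ‖φ t‖ := by
    rw [intervalIntegral.integral_of_le hle]
    have hswap : (∫ ω, F ω ∂μ) = ∫ t, (∫ ω, g (ω, t) ∂μ) ∂(volume.restrict T) :=
      integral_integral_swap hgint
    rw [hswap]
    exact setIntegral_mono_on hinner habsint measurableSet_Ioc hpt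
  have key : (μ A).toReal ≤ π/4 * ∫ t in (-(π/2))..(π/2), ‖φ t‖ := by
    have h0 : 4/π * (μ A).toReal ≤ ∫ t in (-(π/2))..(π/2), ‖φ t‖ :=
      le_trans step1 step2
    have h1 : (μ A).toReal = π/4 * (4/π * (μ A).toReal) := by
      field_simp
    rw [h1]
    apply mul_le_mul_of_nonneg_left h0 (by positivity)
  calc μ A = ENNReal.ofReal ((μ A).toReal) := (ENNReal.ofReal_toReal (measure_ne_top μ A)).symm
    _ ≤ ENNReal.ofReal (π/4 * ∫ t in (-(π/2))..(π/2), ‖φ t‖) :=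
        ENNReal.ofReal_le_ofReal key
end
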